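/- arXiv:2502.06142 — 3 statements merged into one kernel-verified Lean document; each statement's English description precedes it below -/
import Mathlib

section
/- Let x_1,…,x_t ∈ [−1,1]^d be covariates, w̄ ∈ ℝ^d, e_1,…,e_t ∈ ℝ, and set y_τ := x_τᵀ w̄ + e_τ for each τ. For λ > 0, let ŵ_t be any minimizer over w ∈ ℝ^d of ∑_{τ=1}^t (y_τ − x_τᵀ w)² + λ‖w‖₁. Define S̄ := { i ∈ {1,…,d} : w̄(i) ≠ 0 } and Σ_t := ∑_{τ=1}^t x_τ x_τᵀ. If λ_min(Σ_t) > 0 and ‖∑_{τ=1}^t e_τ x_τ‖_∞ ≤ λ/2, then ‖ŵ_t − w̄‖_{Σ_t} ≤ 2λ√|S̄| / √(λ_min(Σ_t)). -/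
/-!
Write `v = ŵ - w̄` and `S` for the support of `w̄`. Comparing the Lasso objective at `ŵ` and
at `w̄` gives `‖v‖²_Σ ≤ 2 ⟨∑ eₜ xₜ, v⟩ + λ (‖w̄‖₁ - ‖ŵ‖₁)`. The noise condition bounds the
inner product by `λ ‖v‖₁ / 2`, and the triangle inequality off and on `S` turns
`‖v‖₁ + ‖w̄‖₁ - ‖ŵ‖₁` into at most `2 ‖v_S‖₁`, so `‖v‖²_Σ ≤ 2λ ‖v_S‖₁ ≤ 2λ √|S| ‖v‖₂`.
No compatibility condition is needed: `λ_min(Σ) ‖v‖₂² ≤ ‖v‖²_Σ` closes the loop.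
-/

open Finset Matrix Unitary

namespace Matrix

variable {n : Type*} [Fintype n]

lemma IsHermitian.posSemidef_sub_smul_one [DecidableEq n] {A : Matrix n n ℝ}
    (hA : A.IsHermitian) {c : ℝ} (hc : ∀ i, c ≤ hA.eigenvalues i) :
    (A - c • 1).PosSemidef := by
  have hshift : A - c • 1 =
      conjStarAlgAut ℝ _ hA.eigenvectorUnitary (diagonal fun i => hA.eigenvalues i - c) := by
    have hdiag : (diagonal fun _ => c : Matrix n n ℝ) = algebraMap ℝ _ c :=
      (algebraMap_eq_diagonal c).symm
    conv_lhs => rw [hA.spectral_theorem]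
    rw [← diagonal_sub, map_sub, hdiag, AlgHomClass.commutes, Algebra.algebraMap_eq_smul_one]
    rfl
  rw [hshift, conjStarAlgAut_apply,
    IsUnit.posSemidef_star_right_conjugate_iff Unitary.isUnit_coe, posSemidef_diagonal_iff]
  exact fun i => sub_nonneg.mpr (hc i)

lemma IsHermitian.iInf_eigenvalues_mul_dotProduct_self_le [DecidableEq n] {A : Matrix n n ℝ}
    (hA : A.IsHermitian) (v : n → ℝ) :
    (⨅ i, hA.eigenvalues i) * (v ⬝ᵥ v) ≤ v ⬝ᵥ (A *ᵥ v) := by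
  have hpsd := hA.posSemidef_sub_smul_one fun i => ciInf_le (Finite.bddBelow_range _) i
  have hnonneg := hpsd.dotProduct_mulVec_nonneg v
  rw [star_trivial, sub_mulVec, smul_mulVec, one_mulVec, dotProduct_sub, dotProduct_smul,
    smul_eq_mul] at hnonneg
  linarith

lemma dotProduct_sum_vecMulVec_self_mulVec {ι R : Type*} [Fintype ι] [CommRing R]
    (x : ι → n → R) (v : n → R) :
    v ⬝ᵥ ((∑ τ, vecMulVec (x τ) (x τ)) *ᵥ v) = ∑ τ, (x τ ⬝ᵥ v) ^ 2 := by
  rw [dotProduct_comm, sum_mulVec, sum_dotProduct]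
  simp only [vecMulVec_mulVec, op_smul_eq_smul, smul_dotProduct, smul_eq_mul, sq]

lemma dotProduct_le_mul_sum_abs {g : n → ℝ} {c : ℝ} (hg : ∀ i, |g i| ≤ c) (v : n → ℝ) :
    g ⬝ᵥ v ≤ c * ∑ i, |v i| := by
  rw [mul_sum]
  refine sum_le_sum fun i _ => ?_
  calc g i * v i ≤ |g i| * |v i| := by rw [← abs_mul]; exact le_abs_self _
    _ ≤ c * |v i| := mul_le_mul_of_nonneg_right (hg i) (abs_nonneg _)

end Matrix

lemma sum_abs_sub_add_sum_abs_sub_sum_abs_le {n : Type*} [Fintype n] (a b : n → ℝ) :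
    ∑ i, |a i - b i| + (∑ i, |b i| - ∑ i, |a i|) ≤
      2 * ∑ i ∈ univ.filter fun i => b i ≠ 0, |a i - b i| := by
  rw [sum_filter, mul_sum, ← sum_sub_distrib, ← sum_add_distrib]
  refine sum_le_sum fun i _ => ?_
  by_cases hb : b i = 0
  · simp [hb]
  · rw [if_pos hb]
    linarith [abs_sub_abs_le_abs_sub (b i) (a i), abs_sub_comm (a i) (b i)]

lemma sum_abs_le_sqrt_card_mul_sqrt_dotProduct_self {n : Type*} [Fintype n] (s : Finset n)
    (v : n → ℝ) :
    ∑ i ∈ s, |v i| ≤ √(#s : ℝ) * √(v ⬝ᵥ v) := by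
  rw [← Real.sqrt_mul (Nat.cast_nonneg _)]
  refine Real.le_sqrt_of_sq_le ((sq_sum_le_card_mul_sum_sq ..).trans ?_)
  refine mul_le_mul_of_nonneg_left ?_ (Nat.cast_nonneg _)
  simp only [sq_abs, dotProduct, ← sq]
  exact sum_le_sum_of_subset_of_nonneg (subset_univ s) fun i _ _ => sq_nonneg _

lemma Real.sqrt_le_div_sqrt_of_le_mul_sqrt {Q K m r : ℝ} (hm : 0 < m) (hK : 0 ≤ K)
    (hQ : Q ≤ K * √r) (hr : m * r ≤ Q) : √Q ≤ K / √m := by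
  rcases (Real.sqrt_nonneg Q).eq_or_lt with hzero | hpos
  · rw [← hzero]
    positivity
  have hsqrt_r : √r ≤ √Q / √m := by
    rw [← Real.sqrt_div' _ hm.le]
    exact Real.sqrt_le_sqrt (by rwa [le_div_iff₀ hm, mul_comm])
  have hsq : √Q * √Q ≤ √Q * (K / √m) := by
    rw [Real.mul_self_sqrt (Real.sqrt_pos.mp hpos).le]
    calc Q ≤ K * (√Q / √m) := hQ.trans (mul_le_mul_of_nonneg_left hsqrt_r hK)
      _ = √Q * (K / √m) := by ring
  exact le_of_mul_le_mul_left hsq hpos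

section Lasso

variable {ι n : Type*} [Fintype ι] [Fintype n] (x : ι → n → ℝ)

lemma lasso_basic_inequality {wbar what : n → ℝ} {e y : ι → ℝ} {lam : ℝ}
    (hy : ∀ τ, y τ = x τ ⬝ᵥ wbar + e τ)
    (hmin : (∑ τ, (y τ - x τ ⬝ᵥ what) ^ 2) + lam * ∑ i, |what i| ≤
      (∑ τ, (y τ - x τ ⬝ᵥ wbar) ^ 2) + lam * ∑ i, |wbar i|) :
    ∑ τ, (x τ ⬝ᵥ (what - wbar)) ^ 2 ≤
      2 * ∑ τ, e τ * (x τ ⬝ᵥ (what - wbar)) + lam * (∑ i, |wbar i| - ∑ i, |what i|) := by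
  have hfit : ∀ τ, (y τ - x τ ⬝ᵥ what) ^ 2 =
      e τ ^ 2 - 2 * (e τ * (x τ ⬝ᵥ (what - wbar))) + (x τ ⬝ᵥ (what - wbar)) ^ 2 := by
    intro τ
    rw [hy, dotProduct_sub]
    ring
  have htruth : ∀ τ, (y τ - x τ ⬝ᵥ wbar) ^ 2 = e τ ^ 2 := fun τ => by rw [hy]; ring
  simp only [hfit, htruth, sum_add_distrib, sum_sub_distrib, ← mul_sum] at hmin
  linarith

lemma lasso_prediction_error_le {wbar what : n → ℝ} {e y : ι → ℝ} {lam : ℝ}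
    (hy : ∀ τ, y τ = x τ ⬝ᵥ wbar + e τ) (hlam : 0 ≤ lam)
    (hmin : (∑ τ, (y τ - x τ ⬝ᵥ what) ^ 2) + lam * ∑ i, |what i| ≤
      (∑ τ, (y τ - x τ ⬝ᵥ wbar) ^ 2) + lam * ∑ i, |wbar i|)
    (hnoise : ∀ i, |∑ τ, e τ * x τ i| ≤ lam / 2) :
    ∑ τ, (x τ ⬝ᵥ (what - wbar)) ^ 2 ≤
      2 * lam * ∑ i ∈ univ.filter fun i => wbar i ≠ 0, |what i - wbar i| := by
  have hbasic := lasso_basic_inequality x hy hmin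
  have hcorr : ∑ τ, e τ * (x τ ⬝ᵥ (what - wbar)) ≤ lam / 2 * ∑ i, |what i - wbar i| := by
    have hswap : ∑ τ, e τ * (x τ ⬝ᵥ (what - wbar)) =
        (fun i => ∑ τ, e τ * x τ i) ⬝ᵥ (what - wbar) := by
      simp only [dotProduct, mul_sum, sum_mul, mul_assoc]
      exact sum_comm
    rw [hswap]
    exact dotProduct_le_mul_sum_abs hnoise _
  have hcone :=
    mul_le_mul_of_nonneg_left (sum_abs_sub_add_sum_abs_sub_sum_abs_le what wbar) hlam
  linarith

end Lasso

theorem lasso_error_bound_general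
    {d t : ℕ} (x : Fin t → (Fin d → ℝ))
    (wbar : Fin d → ℝ) (e : Fin t → ℝ) (y : Fin t → ℝ)
    (hy : ∀ τ, y τ = x τ ⬝ᵥ wbar + e τ)
    (lam : ℝ) (hlam : 0 < lam)
    (what : Fin d → ℝ)
    (hmin : ∀ w : Fin d → ℝ,
      (∑ τ, (y τ - x τ ⬝ᵥ what) ^ 2) + lam * ∑ i, |what i| ≤
        (∑ τ, (y τ - x τ ⬝ᵥ w) ^ 2) + lam * ∑ i, |w i|)
    (Sig : Matrix (Fin d) (Fin d) ℝ) (hSig : Sig = ∑ τ, Matrix.vecMulVec (x τ) (x τ))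
    (hherm : Sig.IsHermitian)
    (hmineig : 0 < ⨅ i, hherm.eigenvalues i)
    (hnoise : ∀ i : Fin d, |∑ τ, e τ * x τ i| ≤ lam / 2) :
    Real.sqrt ((what - wbar) ⬝ᵥ (Sig *ᵥ (what - wbar))) ≤
      2 * lam * Real.sqrt ((Finset.univ.filter fun i => wbar i ≠ 0).card) /
        Real.sqrt (⨅ i, hherm.eigenvalues i) := by
  set S := univ.filter fun i => wbar i ≠ 0
  have hpred :
      (what - wbar) ⬝ᵥ (Sig *ᵥ (what - wbar)) ≤ 2 * lam * ∑ i ∈ S, |what i - wbar i| := by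
    rw [hSig, dotProduct_sum_vecMulVec_self_mulVec]
    exact lasso_prediction_error_le x hy hlam.le (hmin wbar) hnoise
  refine Real.sqrt_le_div_sqrt_of_le_mul_sqrt hmineig (by positivity) ?_
    (hherm.iInf_eigenvalues_mul_dotProduct_self_le (what - wbar))
  calc _ ≤ 2 * lam * ∑ i ∈ S, |what i - wbar i| := hpred
    _ ≤ 2 * lam * (√(#S : ℝ) * √((what - wbar) ⬝ᵥ (what - wbar))) :=
        mul_le_mul_of_nonneg_left
          (sum_abs_le_sqrt_card_mul_sqrt_dotProduct_self S (what - wbar)) (by positivity)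
    _ = _ := by ring

/-- **Error bound for the Lasso estimator with unrestricted minimum eigenvalue** (Lemma E.4).
Let `x_1,…,x_t ∈ [−1,1]^d`, `y_τ = x_τᵀ w̄ + e_τ`, and let `ŵ_t` minimize the Lasso objective
`∑_τ (y_τ − x_τᵀ w)² + λ‖w‖₁`. If the Gram matrix `Σ_t = ∑_τ x_τ x_τᵀ` has strictly positive
minimum eigenvalue and `‖∑_τ e_τ x_τ‖_∞ ≤ λ/2`, then
`‖ŵ_t − w̄‖_{Σ_t} ≤ 2λ√|S̄| / √(λ_min(Σ_t))`, where `S̄` is the support of `w̄`. -/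
theorem lasso_error_bound
    {d t : ℕ} (x : Fin t → (Fin d → ℝ)) (hx : ∀ τ i, |x τ i| ≤ 1)
    (wbar : Fin d → ℝ) (e : Fin t → ℝ) (y : Fin t → ℝ)
    (hy : ∀ τ, y τ = x τ ⬝ᵥ wbar + e τ)
    (lam : ℝ) (hlam : 0 < lam)
    (what : Fin d → ℝ)
    (hmin : ∀ w : Fin d → ℝ,
      (∑ τ, (y τ - x τ ⬝ᵥ what) ^ 2) + lam * ∑ i, |what i| ≤
        (∑ τ, (y τ - x τ ⬝ᵥ w) ^ 2) + lam * ∑ i, |w i|)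
    (Sig : Matrix (Fin d) (Fin d) ℝ) (hSig : Sig = ∑ τ, Matrix.vecMulVec (x τ) (x τ))
    (hherm : Sig.IsHermitian)
    (hmineig : 0 < ⨅ i, hherm.eigenvalues i)
    (hnoise : ∀ i : Fin d, |∑ τ, e τ * x τ i| ≤ lam / 2) :
    Real.sqrt ((what - wbar) ⬝ᵥ (Sig *ᵥ (what - wbar))) ≤
      2 * lam * Real.sqrt ((Finset.univ.filter fun i => wbar i ≠ 0).card) /
        Real.sqrt (⨅ i, hherm.eigenvalues i) :=
  lasso_error_bound_general x wbar e y hy lam hlam what hmin Sig hSig hherm hmineig hnoise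
end

section
/- Let d ≤ K, let x_1,…,x_K ∈ ℝ^d, let X ∈ ℝ^{d×K} be the matrix whose a-th column is x_a, and let p_1,…,p_{K−d} ∈ ℝ^K be orthonormal vectors each orthogonal to every row of X (i.e., X p_j = 0 for all j and p_jᵀ p_{j'} = 1 if j = j' and 0 otherwise). Define the augmented features x̃_a := [x_aᵀ, e_aᵀp_1, …, e_aᵀp_{K−d}]ᵀ ∈ ℝ^K, where e_a denotes the a-th standard basis vector of ℝ^K. Then every eigenvalue of ∑_{a=1}^K x̃_a x̃_aᵀ lies in the interval [ min{λ_min(∑_{a=1}^K x_a x_aᵀ), 1}, max{λ_max(∑_{a=1}^K x_a x_aᵀ), 1} ]. -/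
/-!
With `X` the `K × d` matrix with rows `x_a` and `P` the `K × (K - d)` matrix with columns `p_j`,
the augmented Gram matrix is `[X P]ᵀ [X P] = fromBlocks (XᵀX) (XᵀP) (PᵀX) (PᵀP)`, which the
hypotheses turn into `fromBlocks S 0 0 1`. The spectrum of a block-diagonal matrix is the union of
the spectra of its blocks, so every eigenvalue is either an eigenvalue of `S` or equal to `1`.
-/

open Finset Matrix

namespace Matrix

variable {R n m : Type*}

theorem sum_vecMulVec_self [CommSemiring R] [Fintype n] (B : Matrix n m R) :
    ∑ a, vecMulVec (B a) (B a) = Bᵀ * B := by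
  ext i j
  simp [sum_apply, vecMulVec_apply, mul_apply]

theorem spectrum_fromBlocks_zero [CommRing R] [Fintype n] [Fintype m] [DecidableEq n]
    [DecidableEq m] (A : Matrix n n R) (D : Matrix m m R) :
    spectrum R (fromBlocks A 0 0 D) = spectrum R A ∪ spectrum R D := by
  ext r
  have hblocks : algebraMap R _ r - fromBlocks A 0 0 D =
      fromBlocks (algebraMap R _ r - A) 0 0 (algebraMap R _ r - D) := by
    simp only [Algebra.algebraMap_eq_smul_one, ← fromBlocks_one, fromBlocks_smul, sub_eq_add_neg,
      fromBlocks_neg, fromBlocks_add, smul_zero, neg_zero, add_zero]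
  simp only [Set.mem_union, spectrum.mem_iff, hblocks, isUnit_fromBlocks_zero₂₁, not_and_or]

theorem IsHermitian.spectrum_subset_Icc {𝕜 : Type*} [RCLike 𝕜] [Fintype n] [DecidableEq n]
    {A : Matrix n n 𝕜} (hA : A.IsHermitian) :
    spectrum ℝ A ⊆ Set.Icc (⨅ i, hA.eigenvalues i) (⨆ i, hA.eigenvalues i) := by
  rw [hA.spectrum_real_eq_range_eigenvalues]
  rintro _ ⟨i, rfl⟩
  exact ⟨ciInf_le (Set.finite_range _).bddBelow i, le_ciSup (Set.finite_range _).bddAbove i⟩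

end Matrix

theorem spectrum.one_subset {𝕜 A : Type*} [Field 𝕜] [Ring A] [Algebra 𝕜 A] :
    spectrum 𝕜 (1 : A) ⊆ {1} := by
  rcases subsingleton_or_nontrivial A with hA | hA
  · simp [spectrum.of_subsingleton]
  · simp

theorem augmented_gram_eigenvalue_bounds_general
    {d K : ℕ}
    (x : Fin K → (Fin d → ℝ))
    (p : Fin (K - d) → (Fin K → ℝ))
    (hXp : ∀ j, ∀ i : Fin d, ∑ a, x a i * p j a = 0)
    (horth : ∀ j j', ∑ a, p j a * p j' a = if j = j' then (1 : ℝ) else 0)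
    (xt : Fin K → (Fin d ⊕ Fin (K - d) → ℝ))
    (hxt : ∀ a, xt a = Sum.elim (x a) fun j => p j a)
    (S : Matrix (Fin d) (Fin d) ℝ) (hS : S = ∑ a, Matrix.vecMulVec (x a) (x a))
    (hSh : S.IsHermitian) :
    ∀ c ∈ spectrum ℝ (∑ a, Matrix.vecMulVec (xt a) (xt a)),
      c ∈ Set.Icc (min (⨅ i, hSh.eigenvalues i) 1) (max (⨆ i, hSh.eigenvalues i) 1) := by
  set X : Matrix (Fin K) (Fin d) ℝ := of x
  set P : Matrix (Fin K) (Fin (K - d)) ℝ := of fun a j => p j a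
  have hXtP : Xᵀ * P = 0 := by ext i j; simp [X, P, mul_apply, hXp]
  have hPtP : Pᵀ * P = 1 := by ext j j'; simp [P, mul_apply, one_apply, horth]
  have hgram : ∑ a, vecMulVec (xt a) (xt a) = fromBlocks S 0 0 1 := by
    have hxt' : xt = fromCols X P := by ext a (i | j) <;> simp [X, P, fromCols, hxt]
    have hXtX : Xᵀ * X = S := by rw [hS, ← sum_vecMulVec_self]; rfl
    have hPtX : Pᵀ * X = 0 := by simpa using congrArg transpose hXtP
    rw [hxt', sum_vecMulVec_self (fromCols X P), transpose_fromCols, fromRows_mul_fromCols, hXtX,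
      hXtP, hPtX, hPtP]
  intro c hc
  rw [hgram, spectrum_fromBlocks_zero] at hc
  rcases hc with hcS | hc1
  · obtain ⟨hlo, hhi⟩ := hSh.spectrum_subset_Icc hcS
    exact ⟨(min_le_left _ _).trans hlo, hhi.trans (le_max_left _ _)⟩
  · obtain rfl : c = 1 := spectrum.one_subset hc1
    exact ⟨min_le_right _ _, le_max_right _ _⟩

/-- **Eigenvalue bounds for the augmented Gram matrix** (Lemma E.5).
With observed features `x_a ∈ ℝ^d`, orthonormal vectors `p_1,…,p_{K−d} ∈ ℝ^K` orthogonal to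
every row of the feature matrix `X` (whose `a`-th column is `x_a`), and augmented features
`x̃_a := [x_aᵀ, p_1(a), …, p_{K−d}(a)]ᵀ`, every eigenvalue of `∑_a x̃_a x̃_aᵀ` lies in
`[min{λ_min(∑_a x_a x_aᵀ), 1}, max{λ_max(∑_a x_a x_aᵀ), 1}]`. -/
theorem augmented_gram_eigenvalue_bounds
    {d K : ℕ} (hdK : d ≤ K)
    (x : Fin K → (Fin d → ℝ))
    (p : Fin (K - d) → (Fin K → ℝ))
    (hXp : ∀ j, ∀ i : Fin d, ∑ a, x a i * p j a = 0)
    (horth : ∀ j j', ∑ a, p j a * p j' a = if j = j' then (1 : ℝ) else 0)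
    (xt : Fin K → (Fin d ⊕ Fin (K - d) → ℝ))
    (hxt : ∀ a, xt a = Sum.elim (x a) fun j => p j a)
    (S : Matrix (Fin d) (Fin d) ℝ) (hS : S = ∑ a, Matrix.vecMulVec (x a) (x a))
    (hSh : S.IsHermitian) :
    ∀ c ∈ spectrum ℝ (∑ a, Matrix.vecMulVec (xt a) (xt a)),
      c ∈ Set.Icc (min (⨅ i, hSh.eigenvalues i) 1) (max (⨆ i, hSh.eigenvalues i) 1) :=
  augmented_gram_eigenvalue_bounds_general x p hXp horth xt hxt S hS hSh
end

section
/- For all natural numbers N₁, N₂ and all t ≥ 19 with N₁ + N₂ = t, the following chain of inequalities holds: (−3N₁ − (19/2)N₂)/(N₁ + 4N₂ + 1) ≤ −19/8 + 19/(8t) ≤ −9/4. -/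
/-- **Central algebraic inequality in the proof of Theorem 3.2.**
For natural numbers `N₁, N₂` with `N₁ + N₂ = t` and `t ≥ 19`,
`(−3N₁ − (19/2)N₂)/(N₁ + 4N₂ + 1) ≤ −19/8 + 19/(8t) ≤ −9/4`. -/
theorem bias_term_bound (N₁ N₂ t : ℕ) (ht : 19 ≤ t) (hN : N₁ + N₂ = t) :
    (-3 * (N₁ : ℝ) - (19 / 2) * (N₂ : ℝ)) / ((N₁ : ℝ) + 4 * (N₂ : ℝ) + 1)
        ≤ -19 / 8 + 19 / (8 * (t : ℝ)) ∧
      -19 / 8 + 19 / (8 * (t : ℝ)) ≤ -9 / 4 := by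
  have ha : (0:ℝ) ≤ (N₁:ℝ) := Nat.cast_nonneg _
  have hb : (0:ℝ) ≤ (N₂:ℝ) := Nat.cast_nonneg _
  have htr : (19:ℝ) ≤ (t:ℝ) := by exact_mod_cast ht
  have hNr : (N₁:ℝ) + (N₂:ℝ) = (t:ℝ) := by exact_mod_cast hN
  have htpos : (0:ℝ) < (t:ℝ) := by linarith
  have hden : (0:ℝ) < (N₁:ℝ) + 4 * (N₂:ℝ) + 1 := by linarith
  constructor
  · rw [div_le_iff₀ hden]
    have hinv : 19 / (8 * (t:ℝ)) * (8 * (t:ℝ)) = 19 := by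
      field_simp
    nlinarith [mul_nonneg ha hb, sq_nonneg ((N₁:ℝ) - (N₂:ℝ)), sq_nonneg (N₂:ℝ), mul_pos htpos hden]
  · have : 19 / (8 * (t:ℝ)) ≤ 19 / (8 * 19) := by
      apply div_le_div_of_nonneg_left (by norm_num) (by norm_num) (by linarith)
    linarith
end
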